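/- If A is an absolute retract in a congruence modular variety and Con(A) has finite height (is finite dimensional), then A is isomorphic to a finite product of subdirectly irreducible algebras. -/

import Mathlib

/-- An algebraic signature: a type of operation symbols with finite arities. -/
structure Signature where
  ops : Type
  arity : ops → ℕ

/-- An algebra for a signature. -/
structure SAlgebra (S : Signature) where
  carrier : Type
  interp : (o : S.ops) → (Fin (S.arity o) → carrier) → carrier

namespace SAlgebra

variable {S : Signature}

/-- Binary product of algebras. -/
def prod (A B : SAlgebra S) : SAlgebra S where
  carrier := A.carrier × B.carrier
  interp o x := (A.interp o fun i => (x i).1, B.interp o fun i => (x i).2)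

/-- Product of a family of algebras. -/
def pi {ι : Type} (A : ι → SAlgebra S) : SAlgebra S where
  carrier := ∀ i, (A i).carrier
  interp o x i := (A i).interp o fun j => x j i

end SAlgebra

/-- Homomorphisms of algebras. -/
structure SHom {S : Signature} (A B : SAlgebra S) where
  toFun : A.carrier → B.carrier
  map : ∀ (o : S.ops) (x : Fin (S.arity o) → A.carrier),
    toFun (A.interp o x) = B.interp o fun i => toFun (x i)

namespace SHom

variable {S : Signature}

/-- Composition of homomorphisms. -/
def comp {A B C : SAlgebra S} (g : SHom B C) (f : SHom A B) : SHom A C where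
  toFun := g.toFun ∘ f.toFun
  map o x := by simp [Function.comp, f.map, g.map]

/-- The `i`-th projection of a product. -/
def proj {ι : Type} (A : ι → SAlgebra S) (i : ι) : SHom (SAlgebra.pi A) (A i) where
  toFun x := x i
  map _ _ := rfl

end SHom

/-- Congruences of an algebra. -/
structure SCon {S : Signature} (A : SAlgebra S) where
  r : A.carrier → A.carrier → Prop
  iseqv : Equivalence r
  compat : ∀ (o : S.ops) (x y : Fin (S.arity o) → A.carrier),
    (∀ i, r (x i) (y i)) → r (A.interp o x) (A.interp o y)

namespace SCon

variable {S : Signature} {A : SAlgebra S}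

instance : PartialOrder (SCon A) where
  le c d := ∀ x y, c.r x y → d.r x y
  le_refl _ _ _ h := h
  le_trans _ _ _ h h' x y hx := h' x y (h x y hx)
  le_antisymm a b h h' := by
    cases a; cases b
    have : ∀ x y : A.carrier, _ ↔ _ := fun x y => Iff.intro (h x y) (h' x y)
    simp only [SCon.mk.injEq]
    funext x y
    exact propext (this x y)

instance : InfSet (SCon A) :=
  ⟨fun s =>
    { r := fun x y => ∀ c ∈ s, c.r x y
      iseqv := ⟨fun x c _ => c.iseqv.refl x, fun h c hc => c.iseqv.symm (h c hc),
        fun h1 h2 c hc => c.iseqv.trans (h1 c hc) (h2 c hc)⟩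
      compat := fun o x y h c hc => c.compat o x y fun i => h i c hc }⟩

instance : CompleteLattice (SCon A) :=
  completeLatticeOfInf _ (fun s =>
    ⟨fun c hc x y h => h c hc, fun b hb x y h c hc => hb hc x y h⟩)

/-- Restriction (inverse image) of a congruence along a homomorphism. -/
def comap {B : SAlgebra S} (f : SHom A B) (θ : SCon B) : SCon A where
  r x y := θ.r (f.toFun x) (f.toFun y)
  iseqv := ⟨fun _ => θ.iseqv.refl _, θ.iseqv.symm, θ.iseqv.trans⟩
  compat o x y h := by
    show θ.r (f.toFun (A.interp o x)) (f.toFun (A.interp o y))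
    rw [f.map, f.map]
    exact θ.compat o _ _ h

/-- Product of two congruences. -/
def prodCon {A B : SAlgebra S} (φ : SCon A) (ψ : SCon B) : SCon (A.prod B) where
  r x y := φ.r x.1 y.1 ∧ ψ.r x.2 y.2
  iseqv := ⟨fun _ => ⟨φ.iseqv.refl _, ψ.iseqv.refl _⟩,
    fun h => ⟨φ.iseqv.symm h.1, ψ.iseqv.symm h.2⟩,
    fun h h' => ⟨φ.iseqv.trans h.1 h'.1, ψ.iseqv.trans h.2 h'.2⟩⟩
  compat o x y h := ⟨φ.compat o _ _ fun i => (h i).1, ψ.compat o _ _ fun i => (h i).2⟩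

/-- Product of a family of congruences. -/
def piCon {ι : Type} {A : ι → SAlgebra S} (φ : ∀ i, SCon (A i)) : SCon (SAlgebra.pi A) where
  r x y := ∀ i, (φ i).r (x i) (y i)
  iseqv := ⟨fun _ i => (φ i).iseqv.refl _, fun h i => (φ i).iseqv.symm (h i),
    fun h h' i => (φ i).iseqv.trans (h i) (h' i)⟩
  compat o x y h i := (φ i).compat o _ _ fun j => h j i

end SCon

/-- Terms in `n` variables over a signature. -/
inductive STerm (S : Signature) : ℕ → Type where
  | var : {n : ℕ} → Fin n → STerm S n
  | app : {n : ℕ} → (o : S.ops) → (Fin (S.arity o) → STerm S n) → STerm S n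

/-- Evaluation of a term in an algebra. -/
def STerm.eval {S : Signature} (A : SAlgebra S) {n : ℕ} : STerm S n → (Fin n → A.carrier) → A.carrier
  | .var i, x => x i
  | .app o t, x => A.interp o fun j => (t j).eval A x

/-- The term-condition centralizer relation `C(α, β; δ)`. -/
def Centralizes {S : Signature} (A : SAlgebra S) (α β δ : SCon A) : Prop :=
  ∀ (n m : ℕ) (t : STerm S (n + m)) (a b : Fin n → A.carrier) (u v : Fin m → A.carrier),
    (∀ i, α.r (a i) (b i)) → (∀ j, β.r (u j) (v j)) →
    δ.r (t.eval A (Fin.append a u)) (t.eval A (Fin.append a v)) →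
    δ.r (t.eval A (Fin.append b u)) (t.eval A (Fin.append b v))

/-- The commutator `[α, β]`: the least congruence `δ` with `C(α, β; δ)`. -/
def conCommutator {S : Signature} (A : SAlgebra S) (α β : SCon A) : SCon A :=
  sInf {δ | Centralizes A α β δ}

/-- The center of an algebra: the largest central congruence. -/
def conCenter {S : Signature} (A : SAlgebra S) : SCon A :=
  sSup {θ | conCommutator A θ ⊤ = ⊥}

/-- A class of algebras is a variety iff it is closed under subalgebras
(isomorphic copies included), homomorphic images and products. -/
def IsVariety {S : Signature} (V : SAlgebra S → Prop) : Prop :=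
  (∀ (A B : SAlgebra S) (e : SHom A B), Function.Injective e.toFun → V B → V A) ∧
  (∀ (A B : SAlgebra S) (p : SHom A B), Function.Surjective p.toFun → V A → V B) ∧
  (∀ (ι : Type) (A : ι → SAlgebra S), (∀ i, V (A i)) → V (SAlgebra.pi A))

/-- A congruence modular variety. -/
def IsCongruenceModularVariety {S : Signature} (V : SAlgebra S → Prop) : Prop :=
  IsVariety V ∧ ∀ A : SAlgebra S, V A → IsModularLattice (SCon A)

/-- A Gumm difference term for the class `V`:  `d(x,y,y) = x` holds identically,
and `d(x,x,y) = y` whenever `x θ y` for an abelian congruence `θ`. -/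
def IsGummDifferenceTerm {S : Signature} (V : SAlgebra S → Prop) (d : STerm S 3) : Prop :=
  (∀ A : SAlgebra S, V A → ∀ x y : A.carrier, d.eval A ![x, y, y] = x) ∧
  (∀ A : SAlgebra S, V A → ∀ θ : SCon A, conCommutator A θ θ = ⊥ →
    ∀ x y : A.carrier, θ.r x y → d.eval A ![x, x, y] = y)

/-- `R` is an absolute retract in `V`: every embedding of `R` into a member of `V`
admits a retraction. -/
def IsAbsoluteRetract {S : Signature} (V : SAlgebra S → Prop) (R : SAlgebra S) : Prop :=
  ∀ A : SAlgebra S, V A → ∀ e : SHom R A, Function.Injective e.toFun →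
    ∃ p : SHom A R, ∀ x, p.toFun (e.toFun x) = x

/-- An embedding is essential iff every congruence of the codomain restricting
trivially is trivial. -/
def IsEssential {S : Signature} {A B : SAlgebra S} (e : SHom A B) : Prop :=
  ∀ θ : SCon B, SCon.comap e θ = ⊥ → θ = ⊥

/-- A congruence `α` is dense: any congruence meeting it trivially is trivial. -/
def DenseCon {S : Signature} {A : SAlgebra S} (α : SCon A) : Prop :=
  ∀ θ : SCon A, θ ⊓ α = ⊥ → θ = ⊥

/-- The setoid underlying a congruence. -/
def SCon.setoid {S : Signature} {A : SAlgebra S} (θ : SCon A) : Setoid A.carrier :=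
  ⟨θ.r, θ.iseqv⟩

/-- Quotient algebra. -/
noncomputable def SAlgebra.quot {S : Signature} (A : SAlgebra S) (θ : SCon A) : SAlgebra S where
  carrier := Quotient θ.setoid
  interp o x := Quotient.mk θ.setoid (A.interp o fun i => (x i).out)

theorem SCon.out_rel {S : Signature} {A : SAlgebra S} (θ : SCon A) (a : A.carrier) :
    θ.r (Quotient.out (Quotient.mk θ.setoid a)) a :=
  @Quotient.exact _ θ.setoid _ _ (Quotient.out_eq _)

/-- The canonical quotient homomorphism. -/
def SHom.quotHom {S : Signature} (A : SAlgebra S) (θ : SCon A) : SHom A (A.quot θ) where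
  toFun := Quotient.mk θ.setoid
  map o x := Quotient.sound (θ.compat o _ _ fun i => θ.iseqv.symm (θ.out_rel (x i)))

/-- Product map of a family of homomorphisms. -/
def SHom.piMap {S : Signature} {ι : Type} {A B : ι → SAlgebra S} (f : ∀ i, SHom (A i) (B i)) :
    SHom (SAlgebra.pi A) (SAlgebra.pi B) where
  toFun x i := (f i).toFun (x i)
  map o x := funext fun i => (f i).map o fun j => x j i

/-- The congruence `φ/θ` on the quotient `A/θ`, for `θ ≤ φ`. -/
def SCon.quotCon {S : Signature} {A : SAlgebra S} (θ φ : SCon A) (h : θ ≤ φ) :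
    SCon (A.quot θ) where
  r a b := φ.r a.out b.out
  iseqv := ⟨fun _ => φ.iseqv.refl _, φ.iseqv.symm, φ.iseqv.trans⟩
  compat o x y hxy := by
    have hx := h _ _ (θ.out_rel (A.interp o fun i => (x i).out))
    have hy := h _ _ (θ.out_rel (A.interp o fun i => (y i).out))
    exact φ.iseqv.trans hx (φ.iseqv.trans (φ.compat o _ _ hxy) (φ.iseqv.symm hy))

/-- Finitely subdirectly irreducible: `⊥` is meet irreducible in the congruence lattice. -/
def IsFSI {S : Signature} (A : SAlgebra S) : Prop :=
  ∀ θ φ : SCon A, θ ⊓ φ = ⊥ → θ = ⊥ ∨ φ = ⊥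

/-- Subdirectly irreducible: the congruence lattice has a monolith. -/
def IsSubdirectlyIrreducible {S : Signature} (A : SAlgebra S) : Prop :=
  ∃ μ : SCon A, μ ≠ ⊥ ∧ ∀ θ : SCon A, θ ≠ ⊥ → μ ≤ θ

/-!
The crux is a binary splitting lemma: if `θ` and `φ` are congruences of an absolute retract `A`
in a congruence modular variety, each maximal among the congruences disjoint from the other,
then `A ≅ A/θ × A/φ`. Indeed `A` embeds in `P = A/θ × A/φ`, so it has a retraction `G : P → A`,
and modularity of `Con P`, played against the two maximality conditions, forces `ker G = ⊥`.

Finite height then drives a recursion on congruences `ξ` admitting a factor complement `ζ`.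
Either `A/ξ` is subdirectly irreducible, or `ξ = a ⊓ b` with `a, b > ξ`, and by the ascending
chain condition one may take `a` and `b` mutually maximal with this property. Modularity and
`IsCompl ξ ζ` show that `a` and `b ⊓ ζ` (and likewise `b` and `a ⊓ ζ`) satisfy the hypotheses of
the splitting lemma, hence are factor complements, and the recursion applies to `a` and `b`.
-/

section ModularLattice

variable {L : Type*} [Lattice L] [BoundedOrder L] [IsModularLattice L] {ξ ζ a b : L}

theorem IsCompl.maximal_disjoint (h : IsCompl ξ ζ) : Maximal (Disjoint · ζ) ξ := by
  refine ⟨h.disjoint, fun c hc hξc => ?_⟩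
  rw [← inf_top_eq c, ← h.sup_eq_top, inf_comm, sup_inf_assoc_of_le ζ hξc, inf_comm,
    hc.eq_bot, sup_bot_eq]

theorem Maximal.maximal_disjoint_inf_of_isCompl (ha : Maximal (· ⊓ b = ξ) a)
    (hξζ : IsCompl ξ ζ) : Maximal (Disjoint · (b ⊓ ζ)) a := by
  refine ⟨disjoint_iff.2 ?_, fun ρ hρ haρ => ha.2 ?_ haρ⟩
  · rw [← inf_assoc, ha.prop, hξζ.inf_eq_bot]
  · have hξρ : ξ ≤ ρ ⊓ b := ha.prop ▸ inf_le_inf_right b haρ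
    refine le_antisymm (hξζ.maximal_disjoint.2 ?_ hξρ) hξρ
    exact disjoint_iff.2 (by rw [inf_assoc, hρ.eq_bot])

theorem Maximal.inf_maximal_disjoint_of_isCompl (hb : Maximal (· ⊓ a = ξ) b)
    (hξζ : IsCompl ξ ζ) : Maximal (Disjoint · a) (b ⊓ ζ) := by
  have hξa : ξ ≤ a := hb.prop ▸ inf_le_right
  have hξb : ξ ≤ b := hb.prop ▸ inf_le_left
  refine ⟨disjoint_iff.2 ?_, fun ρ hρ hbρ => ?_⟩
  · rw [inf_right_comm, hb.prop, hξζ.inf_eq_bot]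
  have hb_le : b ≤ ξ ⊔ ρ :=
    calc b = ξ ⊔ ζ ⊓ b := by rw [← sup_inf_assoc_of_le ζ hξb, hξζ.sup_eq_top, top_inf_eq]
      _ ≤ ξ ⊔ ρ := sup_le_sup_left (inf_comm ζ b ▸ hbρ) ξ
  have hρb : ρ ≤ b := by
    refine le_sup_right.trans (hb.2 (show (ξ ⊔ ρ) ⊓ a = ξ from ?_) hb_le)
    rw [sup_inf_assoc_of_le ρ hξa, hρ.eq_bot, sup_bot_eq]
  have hρζ : Disjoint (ρ ⊔ ζ) ξ := by
    have hmod : (ρ ⊔ ζ) ⊓ b = ρ := by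
      rw [sup_inf_assoc_of_le ζ hρb, sup_eq_left, inf_comm]; exact hbρ
    refine disjoint_iff.2 (le_bot_iff.1 ?_)
    calc (ρ ⊔ ζ) ⊓ ξ ≤ (ρ ⊔ ζ) ⊓ b ⊓ a :=
          le_inf (inf_le_inf_left _ hξb) (inf_le_right.trans hξa)
      _ = ⊥ := by rw [hmod, hρ.eq_bot]
  exact le_inf hρb (le_sup_left.trans (hξζ.symm.maximal_disjoint.2 hρζ le_sup_right))

end ModularLattice

section WellFounded

variable {L : Type*} [Lattice L] {ξ a b : L}

theorem exists_maximal_inf_eq_pair [WellFoundedGT L] (h : a ⊓ b = ξ) :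
    ∃ a' ≥ a, ∃ b' ≥ b, Maximal (· ⊓ b' = ξ) a' ∧ Maximal (· ⊓ a' = ξ) b' := by
  obtain ⟨a', haa', ha'⟩ := exists_maximal_ge_of_wellFoundedGT (· ⊓ b = ξ) a h
  obtain ⟨b', hbb', hb'⟩ :=
    exists_maximal_ge_of_wellFoundedGT (· ⊓ a' = ξ) b (by rw [inf_comm]; exact ha'.prop)
  refine ⟨a', haa', b', hbb', ⟨show a' ⊓ b' = ξ by rw [inf_comm]; exact hb'.prop,
    fun ρ hρ ha'ρ => ha'.2 (le_antisymm ?_ ?_) ha'ρ⟩, hb'⟩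
  · exact hρ ▸ inf_le_inf_left ρ hbb'
  · exact ha'.prop ▸ inf_le_inf_right b ha'ρ

theorem exists_least_gt_or_exists_inf_eq [WellFoundedLT L] (hξ : ¬IsMax ξ) :
    (∃ μ, ξ < μ ∧ ∀ ρ, ξ < ρ → μ ≤ ρ) ∨ ∃ a b, ξ < a ∧ ξ < b ∧ a ⊓ b = ξ := by
  refine or_iff_not_imp_right.2 fun hsplit => ?_
  obtain ⟨μ, hμ⟩ := exists_minimal_of_wellFoundedLT (ξ < ·) (not_isMax_iff.1 hξ)
  refine ⟨μ, hμ.prop, fun ρ hρ => ?_⟩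
  have hξρμ : ξ < ρ ⊓ μ :=
    (le_inf hρ.le hμ.prop.le).lt_of_ne fun h => hsplit ⟨ρ, μ, hρ, hμ.prop, h.symm⟩
  exact (hμ.2 hξρμ inf_le_right).trans inf_le_left

end WellFounded

theorem wellFoundedGT_of_chain_length_le {P : Type*} [Preorder P] {N : ℕ}
    (h : ∀ l : List P, l.IsChain (· < ·) → l.length ≤ N) : WellFoundedGT P := by
  refine ⟨RelEmbedding.wellFounded_iff_isEmpty.2 ⟨fun f => ?_⟩⟩
  have hchain : ((List.range (N + 1)).map f).IsChain (· < ·) := by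
    rw [List.isChain_map, List.isChain_range_succ]
    exact fun m _ => f.map_rel_iff.2 (Nat.lt_succ_self m)
  simpa using h _ hchain

theorem wellFoundedLT_of_chain_length_le {P : Type*} [Preorder P] {N : ℕ}
    (h : ∀ l : List P, l.IsChain (· < ·) → l.length ≤ N) : WellFoundedLT P :=
  (wellFoundedGT_of_chain_length_le (P := Pᵒᵈ) fun l hl =>
    List.length_reverse (as := l) ▸ h _ (List.isChain_reverse.2 hl) :)

namespace SCon

variable {S : Signature} {A B : SAlgebra S}

theorem le_iff {a b : SCon A} : a ≤ b ↔ ∀ x y, a.r x y → b.r x y := Iff.rfl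

@[ext]
theorem ext {a b : SCon A} (h : ∀ x y, a.r x y ↔ b.r x y) : a = b :=
  le_antisymm (fun x y => (h x y).1) (fun x y => (h x y).2)

theorem sInf_r_iff {s : Set (SCon A)} {x y : A.carrier} :
    (sInf s).r x y ↔ ∀ c ∈ s, c.r x y := Iff.rfl

theorem iInf_r_iff {ι : Sort*} {c : ι → SCon A} {x y : A.carrier} :
    (⨅ i, c i).r x y ↔ ∀ i, (c i).r x y :=
  sInf_r_iff.trans Set.forall_mem_range

theorem inf_r_iff {a b : SCon A} {x y : A.carrier} : (a ⊓ b).r x y ↔ a.r x y ∧ b.r x y := by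
  show (∀ c ∈ ({a, b} : Set (SCon A)), c.r x y) ↔ _
  simp

theorem sup_r_of_r_of_r {a b : SCon A} {x y z : A.carrier} (hxy : a.r x y) (hyz : b.r y z) :
    (a ⊔ b).r x z :=
  (a ⊔ b).iseqv.trans ((le_sup_left : a ≤ a ⊔ b) x y hxy) ((le_sup_right : b ≤ a ⊔ b) y z hyz)

theorem top_r (x y : A.carrier) : (⊤ : SCon A).r x y :=
  sInf_r_iff.2 fun _ h => h.elim

theorem bot_r_iff {x y : A.carrier} : (⊥ : SCon A).r x y ↔ x = y := by
  refine ⟨fun h => ?_, fun h => h ▸ (⊥ : SCon A).iseqv.refl x⟩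
  let diag : SCon A := ⟨Eq, eq_equivalence, fun _ _ _ h => congrArg _ (funext h)⟩
  exact (bot_le : ⊥ ≤ diag) x y h

theorem ne_bot_iff {a : SCon A} : a ≠ ⊥ ↔ ∃ x y, a.r x y ∧ x ≠ y := by
  rw [Ne, ← le_bot_iff, le_iff]
  simp only [bot_r_iff, not_forall, exists_prop]

@[simp]
theorem comap_r {f : SHom A B} {θ : SCon B} {x y : A.carrier} :
    (comap f θ).r x y ↔ θ.r (f.toFun x) (f.toFun y) := Iff.rfl

theorem comap_mono (f : SHom A B) {a b : SCon B} (h : a ≤ b) : comap f a ≤ comap f b :=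
  fun _ _ => h _ _

theorem comap_inf (f : SHom A B) (a b : SCon B) : comap f (a ⊓ b) = comap f a ⊓ comap f b := by
  ext; simp only [comap_r, inf_r_iff]

theorem comap_le_comap_iff {f : SHom A B} (hf : Function.Surjective f.toFun) {a b : SCon B} :
    comap f a ≤ comap f b ↔ a ≤ b := by
  refine ⟨fun h p q hpq => ?_, comap_mono f⟩
  obtain ⟨x, rfl⟩ := hf p
  obtain ⟨y, rfl⟩ := hf q
  exact h x y hpq

theorem comap_comap_of_leftInverse {e : SHom A B} {g : SHom B A}
    (h : ∀ x, g.toFun (e.toFun x) = x) (θ : SCon A) : comap e (comap g θ) = θ := by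
  ext; simp only [comap_r, h]

def ker (f : SHom A B) : SCon A where
  r x y := f.toFun x = f.toFun y
  iseqv := ⟨fun _ => rfl, Eq.symm, Eq.trans⟩
  compat o x y h := by simp only [f.map, funext h]

@[simp]
theorem ker_r {f : SHom A B} {x y : A.carrier} : (ker f).r x y ↔ f.toFun x = f.toFun y := Iff.rfl

theorem ker_eq_bot_iff {f : SHom A B} : ker f = ⊥ ↔ Function.Injective f.toFun := by
  simp only [← le_bot_iff, le_iff, ker_r, bot_r_iff, Function.Injective]

theorem comap_ker_of_leftInverse {e : SHom A B} {g : SHom B A}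
    (h : ∀ x, g.toFun (e.toFun x) = x) : comap e (ker g) = ⊥ := by
  ext; simp only [comap_r, ker_r, h, bot_r_iff]

theorem mk_eq_mk_iff (θ : SCon A) {x y : A.carrier} :
    Quotient.mk θ.setoid x = Quotient.mk θ.setoid y ↔ θ.r x y :=
  @Quotient.eq _ θ.setoid _ _

end SCon

namespace SHom

variable {S : Signature} {A : SAlgebra S}

theorem quotHom_surjective (θ : SCon A) : Function.Surjective (quotHom A θ).toFun :=
  Quotient.mk_surjective

def quotPi {ι : Type} (A : SAlgebra S) (c : ι → SCon A) :
    SHom A (SAlgebra.pi fun i => A.quot (c i)) where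
  toFun a i := Quotient.mk (c i).setoid a
  map o x := funext fun i => (quotHom A (c i)).map o x

variable {ι : Type} {c : ι → SCon A}

theorem quotPi_injective (h : ⨅ i, c i = ⊥) : Function.Injective (quotPi A c).toFun :=
  fun _ _ hxy => SCon.bot_r_iff.1 <| h ▸ SCon.iInf_r_iff.2 fun i =>
    (SCon.mk_eq_mk_iff (c i)).1 (congrFun hxy i)

theorem quotPi_surjective_iff : Function.Surjective (quotPi A c).toFun ↔
    ∀ t : ι → A.carrier, ∃ w, ∀ i, (c i).r w (t i) := by
  refine ⟨fun h t => ?_, fun h p => ?_⟩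
  · obtain ⟨w, hw⟩ := h fun i => Quotient.mk (c i).setoid (t i)
    exact ⟨w, fun i => (SCon.mk_eq_mk_iff (c i)).1 (congrFun hw i)⟩
  · obtain ⟨w, hw⟩ := h fun i => (p i).out
    refine ⟨w, funext fun i => ?_⟩
    rw [← @Quotient.out_eq _ (c i).setoid (p i)]
    exact (SCon.mk_eq_mk_iff (c i)).2 (hw i)

theorem comap_quotPi_ker_proj (i : ι) : SCon.comap (quotPi A c) (SCon.ker (proj _ i)) = c i := by
  ext; exact SCon.mk_eq_mk_iff (c i)

theorem exists_quotPi_ker_proj (i : ι) (p : (SAlgebra.pi fun i => A.quot (c i)).carrier) :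
    ∃ a, (SCon.ker (proj _ i)).r ((quotPi A c).toFun a) p :=
  ⟨(p i).out, @Quotient.out_eq _ (c i).setoid (p i)⟩

end SHom

namespace SCon

variable {S : Signature} {A : SAlgebra S}

theorem isCompl_ker_proj_true_false (B : Bool → SAlgebra S) :
    IsCompl (ker (SHom.proj B true)) (ker (SHom.proj B false)) := by
  refine ⟨disjoint_iff.2 <| ext fun x y => ?_, codisjoint_iff.2 <| eq_top_iff.2 fun x y _ => ?_⟩
  · simp only [inf_r_iff, ker_r, bot_r_iff]
    exact ⟨fun h => funext (Bool.rec h.2 h.1), fun h => h ▸ ⟨rfl, rfl⟩⟩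
  · exact sup_r_of_r_of_r (y := (fun b => Bool.rec (y false) (x true) b : ∀ b, (B b).carrier))
      (ker_r.2 rfl) (ker_r.2 rfl)

theorem comap_quotHom_bot (ξ : SCon A) : comap (SHom.quotHom A ξ) ⊥ = ξ := by
  ext; exact bot_r_iff.trans (mk_eq_mk_iff ξ)

theorem comap_quotHom_quotCon {ξ μ : SCon A} (h : ξ ≤ μ) :
    comap (SHom.quotHom A ξ) (quotCon ξ μ h) = μ := by
  ext x y
  have hx := h _ _ (ξ.out_rel x)
  have hy := h _ _ (ξ.out_rel y)
  exact ⟨fun hr => μ.iseqv.trans (μ.iseqv.symm hx) (μ.iseqv.trans hr hy),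
    fun hr => μ.iseqv.trans hx (μ.iseqv.trans hr (μ.iseqv.symm hy))⟩

theorem isSubdirectlyIrreducible_quot {ξ μ : SCon A} (hμ : ξ < μ)
    (hmin : ∀ ρ, ξ < ρ → μ ≤ ρ) : IsSubdirectlyIrreducible (A.quot ξ) := by
  have hsurj := SHom.quotHom_surjective ξ
  refine ⟨quotCon ξ μ hμ.le, fun h => hμ.ne ?_, fun θ hθ => ?_⟩
  · rw [← comap_quotHom_quotCon hμ.le, h, comap_quotHom_bot]
  · have hlt : ξ < comap (SHom.quotHom A ξ) θ := by
      refine (comap_quotHom_bot ξ).symm.trans_lt ((comap_mono _ bot_le).lt_of_ne fun h => ?_)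
      exact hθ (le_bot_iff.1 ((comap_le_comap_iff hsurj).1 h.ge))
    rw [← comap_le_comap_iff hsurj, comap_quotHom_quotCon]
    exact hmin _ hlt

end SCon

namespace IsVariety

variable {S : Signature} {V : SAlgebra S → Prop}

theorem quot (hV : IsVariety V) {A : SAlgebra S} (hA : V A) (θ : SCon A) : V (A.quot θ) :=
  hV.2.1 A _ (SHom.quotHom A θ) (SHom.quotHom_surjective θ) hA

end IsVariety

theorem IsAbsoluteRetract.nonempty {S : Signature} {V : SAlgebra S → Prop} {A : SAlgebra S}
    (hV : IsVariety V) (har : IsAbsoluteRetract V A) : Nonempty A.carrier := by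
  rcases isEmpty_or_nonempty A.carrier with hA | hA
  · obtain ⟨p, -⟩ := har _ (hV.2.2 Empty Empty.elim Empty.rec)
      ⟨fun a => isEmptyElim a, fun _ x => isEmptyElim (A.interp _ x)⟩
      (Function.injective_of_subsingleton _)
    exact ⟨p.toFun Empty.rec⟩
  · exact hA

namespace SCon

variable {S : Signature} {A P : SAlgebra S} [IsModularLattice (SCon P)] {e : SHom A P}
  {α β : SCon P}

theorem comap_ne_bot_of_le_of_maximal (hαβ : Disjoint α β)
    (hβe : ∀ p, ∃ a, β.r (e.toFun a) p)
    (hβ : Maximal (Disjoint · (comap e α)) (comap e β)) {Ξ : SCon P} (hΞα : Ξ ≤ α)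
    (hΞ : Ξ ≠ ⊥) : comap e Ξ ≠ ⊥ := by
  obtain ⟨x, y, hxy, hne⟩ := ne_bot_iff.1 hΞ
  obtain ⟨v₁, hv₁⟩ := hβe x
  obtain ⟨v₂, hv₂⟩ := hβe y
  have hv : (Ξ ⊔ β).r (e.toFun v₁) (e.toFun v₂) :=
    (Ξ ⊔ β).iseqv.trans ((le_sup_right : β ≤ Ξ ⊔ β) _ _ hv₁)
      (sup_r_of_r_of_r hxy (β.iseqv.symm hv₂))
  have hlt : comap e β < comap e (Ξ ⊔ β) := by
    refine (comap_mono e le_sup_right).lt_of_not_ge fun hle => hne ?_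
    have hβxy : β.r x y := β.iseqv.trans (β.iseqv.symm hv₁) (β.iseqv.trans (hle _ _ hv) hv₂)
    exact bot_r_iff.1 (hαβ.eq_bot ▸ inf_r_iff.2 ⟨hΞα _ _ hxy, hβxy⟩)
  have hmod : (Ξ ⊔ β) ⊓ α = Ξ := by
    rw [sup_inf_assoc_of_le β hΞα, hαβ.symm.eq_bot, sup_bot_eq]
  intro h
  exact hβ.not_prop_of_gt hlt (disjoint_iff.2 (by rw [← comap_inf, hmod, h]))

theorem ker_eq_bot_of_leftInverse {G : SHom P A} (hG : ∀ x, G.toFun (e.toFun x) = x)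
    (hαβ : IsCompl α β) (hαe : ∀ p, ∃ a, α.r (e.toFun a) p)
    (hβe : ∀ p, ∃ a, β.r (e.toFun a) p)
    (hα : Maximal (Disjoint · (comap e β)) (comap e α))
    (hβ : Maximal (Disjoint · (comap e α)) (comap e β)) : ker G = ⊥ := by
  set K := ker G
  have hKe : comap e K = ⊥ := comap_ker_of_leftInverse hG
  have hK : ∀ p, K.r p (e.toFun (G.toFun p)) := fun p => (hG _).symm
  have hα' : ∀ Ξ ≤ α, Ξ ≠ ⊥ → comap e Ξ ≠ ⊥ := fun Ξ =>
    comap_ne_bot_of_le_of_maximal hαβ.disjoint hβe hβ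
  have hβ' : ∀ Ξ ≤ β, Ξ ≠ ⊥ → comap e Ξ ≠ ⊥ := fun Ξ =>
    comap_ne_bot_of_le_of_maximal hαβ.disjoint.symm hαe hα
  have hKα : Disjoint K α := disjoint_iff.2 <| by_contra fun h =>
    hα' _ inf_le_right h (le_bot_iff.1 (hKe ▸ comap_mono e inf_le_left))
  by_contra hK_ne
  have hD : comap e ((K ⊔ α) ⊓ β) ≠ ⊥ := by
    refine hβ' _ inf_le_right fun h => hK_ne ?_
    have := hKα.disjoint_sup_right_of_disjoint_sup_left (disjoint_iff.2 h)
    rwa [hαβ.sup_eq_top, disjoint_top] at this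
  rw [comap_inf] at hD
  set D := comap e (K ⊔ α) ⊓ comap e β
  set Γ := comap G D
  have hΓe : comap e Γ = D := comap_comap_of_leftInverse hG D
  have hKΓ : K ≤ Γ := fun p q (h : G.toFun p = G.toFun q) => by
    simp only [Γ, comap_r, h]; exact D.iseqv.refl _
  have hΓKα : Γ ≤ K ⊔ α := fun p q h =>
    (K ⊔ α).iseqv.trans ((le_sup_left : K ≤ K ⊔ α) _ _ (hK p))
      ((K ⊔ α).iseqv.trans (inf_r_iff.1 h).1
        ((le_sup_left : K ≤ K ⊔ α) _ _ (K.iseqv.symm (hK q))))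
  have hΓα : Γ ⊓ α ≠ ⊥ := by
    intro h
    have hΓK : Γ = K := by
      rw [← inf_eq_right.2 hΓKα, sup_inf_assoc_of_le α hKΓ, inf_comm, h, sup_bot_eq]
    exact hD (by rw [← hΓe, hΓK, hKe])
  refine hα' _ inf_le_right hΓα (le_bot_iff.1 ?_)
  rw [comap_inf, hΓe, ← hβ.prop.eq_bot]
  exact inf_le_inf_right _ inf_le_right

end SCon

theorem IsAbsoluteRetract.exists_of_maximal_disjoint {S : Signature} {V : SAlgebra S → Prop}
    {A : SAlgebra S} (hV : IsCongruenceModularVariety V) (hA : V A)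
    (har : IsAbsoluteRetract V A) {θ φ : SCon A} (hθ : Maximal (Disjoint · φ) θ)
    (hφ : Maximal (Disjoint · θ) φ) (u v : A.carrier) : ∃ w, θ.r w u ∧ φ.r w v := by
  let c : Bool → SCon A := fun b => cond b θ φ
  have hP : V (SAlgebra.pi fun b => A.quot (c b)) := hV.1.2.2 _ _ fun b => hV.1.quot hA (c b)
  have := hV.2 _ hP
  have hinf : ⨅ b, c b = ⊥ := by rw [iInf_bool_eq]; exact hθ.prop.eq_bot
  obtain ⟨G, hG⟩ := har _ hP (SHom.quotPi A c) (SHom.quotPi_injective hinf)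
  have hcomap := SHom.comap_quotPi_ker_proj (c := c)
  have hK := SCon.ker_eq_bot_of_leftInverse hG (SCon.isCompl_ker_proj_true_false _)
    (SHom.exists_quotPi_ker_proj true) (SHom.exists_quotPi_ker_proj false)
    (by rwa [hcomap, hcomap]) (by rwa [hcomap, hcomap])
  have hsurj : Function.Surjective (SHom.quotPi A c).toFun := fun p =>
    ⟨G.toFun p, SCon.ker_eq_bot_iff.1 hK (hG _)⟩
  obtain ⟨w, hw⟩ := SHom.quotPi_surjective_iff.1 hsurj fun b => cond b u v
  exact ⟨w, hw true, hw false⟩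

namespace SCon

variable {S : Signature} {A : SAlgebra S}

/-- `θ` and `φ` are complementary factor congruences: `A ≅ A/θ × A/φ` canonically. -/
def IsFactorPair (θ φ : SCon A) : Prop :=
  Disjoint θ φ ∧ ∀ u v, ∃ w, θ.r w u ∧ φ.r w v

theorem IsFactorPair.isCompl {θ φ : SCon A} (h : IsFactorPair θ φ) : IsCompl θ φ := by
  refine ⟨h.1, codisjoint_iff.2 (eq_top_iff.2 fun u v _ => ?_)⟩
  obtain ⟨w, hθ, hφ⟩ := h.2 u v
  exact sup_r_of_r_of_r (θ.iseqv.symm hθ) hφ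

theorem isFactorPair_bot_top : IsFactorPair (⊥ : SCon A) ⊤ :=
  ⟨disjoint_bot_left, fun u v => ⟨u, (⊥ : SCon A).iseqv.refl u, top_r u v⟩⟩

/-- `A/ξ ≅ ∏ i, A/c i` canonically, with subdirectly irreducible factors. -/
def IsSIDecomposition (ξ : SCon A) {m : ℕ} (c : Fin m → SCon A) : Prop :=
  ⨅ i, c i = ξ ∧ (∀ t : Fin m → A.carrier, ∃ w, ∀ i, (c i).r w (t i)) ∧
    ∀ i, IsSubdirectlyIrreducible (A.quot (c i))

theorem isSIDecomposition_top [Nonempty A.carrier] :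
    IsSIDecomposition (⊤ : SCon A) (Fin.elim0 : Fin 0 → SCon A) :=
  ⟨iInf_of_empty _, fun _ => ⟨Classical.arbitrary _, fun i => i.elim0⟩, fun i => i.elim0⟩

theorem isSIDecomposition_single {ξ μ : SCon A} (hμ : ξ < μ) (hmin : ∀ ρ, ξ < ρ → μ ≤ ρ) :
    IsSIDecomposition ξ fun _ : Fin 1 => ξ :=
  ⟨iInf_const, fun t => ⟨t 0, fun i => Subsingleton.elim i 0 ▸ ξ.iseqv.refl _⟩,
    fun _ => isSubdirectlyIrreducible_quot hμ hmin⟩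

theorem IsSIDecomposition.append {a b : SCon A} {m₁ m₂ : ℕ} {c₁ : Fin m₁ → SCon A}
    {c₂ : Fin m₂ → SCon A} (h₁ : IsSIDecomposition a c₁) (h₂ : IsSIDecomposition b c₂)
    (hab : ∀ u v, ∃ w, a.r w u ∧ b.r w v) : IsSIDecomposition (a ⊓ b) (Fin.append c₁ c₂) := by
  obtain ⟨hinf₁, hsurj₁, hSI₁⟩ := h₁
  obtain ⟨hinf₂, hsurj₂, hSI₂⟩ := h₂
  refine ⟨?_, fun t => ?_, Fin.addCases (by simpa using hSI₁) (by simpa using hSI₂)⟩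
  · ext x y
    simp only [iInf_r_iff, inf_r_iff, Fin.forall_fin_add, Fin.append_left, Fin.append_right,
      ← hinf₁, ← hinf₂]
  obtain ⟨w₁, hw₁⟩ := hsurj₁ fun i => t (Fin.castAdd m₂ i)
  obtain ⟨w₂, hw₂⟩ := hsurj₂ fun i => t (Fin.natAdd m₁ i)
  obtain ⟨w, hwa, hwb⟩ := hab w₁ w₂
  refine ⟨w, Fin.addCases (fun i => ?_) (fun i => ?_)⟩
  · simpa using (c₁ i).iseqv.trans ((hinf₁ ▸ iInf_le c₁ i : a ≤ c₁ i) _ _ hwa) (hw₁ i)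
  · simpa using (c₂ i).iseqv.trans ((hinf₂ ▸ iInf_le c₂ i : b ≤ c₂ i) _ _ hwb) (hw₂ i)

end SCon

open SCon in
theorem IsAbsoluteRetract.exists_isSIDecomposition {S : Signature} {V : SAlgebra S → Prop}
    {A : SAlgebra S} (hV : IsCongruenceModularVariety V) (hA : V A)
    (har : IsAbsoluteRetract V A) [WellFoundedLT (SCon A)] [WellFoundedGT (SCon A)]
    [Nonempty A.carrier] {ξ ζ : SCon A} (hξζ : IsFactorPair ξ ζ) :
    ∃ m, ∃ c : Fin m → SCon A, IsSIDecomposition ξ c := by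
  have := hV.2 A hA
  induction ξ using WellFoundedGT.induction generalizing ζ with
  | ind ξ ih =>
  rcases eq_or_ne ξ ⊤ with rfl | hξ
  · exact ⟨0, _, isSIDecomposition_top⟩
  rcases exists_least_gt_or_exists_inf_eq (not_isMax_iff_ne_top.2 hξ) with
    ⟨μ, hμ, hmin⟩ | ⟨a, b, ha, hb, hab⟩
  · exact ⟨1, _, isSIDecomposition_single hμ hmin⟩
  obtain ⟨a', haa', b', hbb', ha'max, hb'max⟩ := exists_maximal_inf_eq_pair hab
  have hc := hξζ.isCompl
  have ha₁ := ha'max.maximal_disjoint_inf_of_isCompl hc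
  have ha₂ := hb'max.inf_maximal_disjoint_of_isCompl hc
  have hb₁ := hb'max.maximal_disjoint_inf_of_isCompl hc
  have hb₂ := ha'max.inf_maximal_disjoint_of_isCompl hc
  have hperm := har.exists_of_maximal_disjoint hV hA ha₁ ha₂
  obtain ⟨m₁, c₁, hc₁⟩ := ih a' (ha.trans_le haa') ⟨ha₁.prop, hperm⟩
  obtain ⟨m₂, c₂, hc₂⟩ :=
    ih b' (hb.trans_le hbb') ⟨hb₁.prop, har.exists_of_maximal_disjoint hV hA hb₁ hb₂⟩
  refine ⟨_, _, ha'max.prop ▸ hc₁.append hc₂ fun u v => ?_⟩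
  obtain ⟨w, hwa, hwb⟩ := hperm u v
  exact ⟨w, hwa, (inf_r_iff.1 hwb).1⟩

/-- An absolute retract in a congruence modular variety whose congruence lattice has
finite height is a finite product of subdirectly irreducible algebras. -/
theorem AR_finite_height_product_of_SI {S : Signature}
    (V : SAlgebra S → Prop) (hV : IsCongruenceModularVariety V)
    (A : SAlgebra S) (hA : V A) (har : IsAbsoluteRetract V A)
    (hfd : ∃ N : ℕ, ∀ l : List (SCon A), l.Chain' (· < ·) → l.length ≤ N) :
    ∃ (n : ℕ) (B : Fin n → SAlgebra S) (f : SHom A (SAlgebra.pi B)),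
      Function.Bijective f.toFun ∧ ∀ i, IsSubdirectlyIrreducible (B i) := by
  obtain ⟨N, hN⟩ := hfd
  have := wellFoundedLT_of_chain_length_le hN
  have := wellFoundedGT_of_chain_length_le hN
  have := har.nonempty hV.1
  obtain ⟨n, c, hinf, hsurj, hSI⟩ :=
    har.exists_isSIDecomposition hV hA SCon.isFactorPair_bot_top
  exact ⟨n, fun i => A.quot (c i), SHom.quotPi A c,
    ⟨SHom.quotPi_injective hinf, SHom.quotPi_surjective_iff.2 hsurj⟩, hSI⟩
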